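/- arXiv:2403.01232 — 2 statements merged into one kernel-verified Lean document; each statement's English description precedes it below -/
import Mathlib

section
/- For every n ≥ 1, d ≥ 1, L ≥ 1, every node index i ∈ {1,…,n}, and every index tuple (j₁,…,j_{2^L−1}) ∈ {1,…,n}^{2^L−1}, there exist weight matrices W^{(1)},…,W^{(L)} ∈ ℝ^{n×n} such that the L-layer base model with all bias matrices B^{(l)} = 0 satisfies, for every input X ∈ ℝ^{n×d}, X^{(L)}_i = X_i ⊙ X_{j₁} ⊙ X_{j₂} ⊙ ⋯ ⊙ X_{j_{2^L−1}}. In other words, an L-layer base model is 2^L-polynomial-expressive. -/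
open Matrix Finset

/-- The base model: `X⁽⁰⁾ = X`, `X⁽ˡ⁾ = (W⁽ˡ⁾ X⁽ˡ⁻¹⁾) ⊙ (X⁽ˡ⁻¹⁾ + B⁽ˡ⁾)` with all biases `B⁽ˡ⁾ = 0`. -/
def baseModel {n d : ℕ} (W : ℕ → Matrix (Fin n) (Fin n) ℝ)
    (X : Matrix (Fin n) (Fin d) ℝ) : ℕ → Matrix (Fin n) (Fin d) ℝ
  | 0 => X
  | l + 1 => Matrix.hadamard (W (l + 1) * baseModel W X l) (baseModel W X l)

lemma baseModel_congr {n d : ℕ} (W₁ W₂ : ℕ → Matrix (Fin n) (Fin n) ℝ)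
    (X : Matrix (Fin n) (Fin d) ℝ) (l : ℕ)
    (h : ∀ m, 1 ≤ m → m ≤ l → W₁ m = W₂ m) :
    baseModel W₁ X l = baseModel W₂ X l := by
  induction l with
  | zero => rfl
  | succ l ih =>
    have h' : ∀ m, 1 ≤ m → m ≤ l → W₁ m = W₂ m := fun m h1 h2 => h m h1 (by omega)
    simp only [baseModel, ih h', h (l+1) (by omega) le_rfl]

lemma baseModel_shift {n d : ℕ} (W : ℕ → Matrix (Fin n) (Fin n) ℝ)
    (X : Matrix (Fin n) (Fin d) ℝ) (l : ℕ) :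
    baseModel W X (l + 1) = baseModel (fun m => W (m + 1)) (baseModel W X 1) l := by
  induction l with
  | zero => rfl
  | succ l ih =>
    show Matrix.hadamard (W (l + 1 + 1) * baseModel W X (l + 1)) (baseModel W X (l + 1)) =
      Matrix.hadamard ((fun m => W (m + 1)) (l + 1) * baseModel (fun m => W (m + 1)) (baseModel W X 1) l)
        (baseModel (fun m => W (m + 1)) (baseModel W X 1) l)
    rw [ih]

lemma prod_cons_ofFn {α M : Type*} [CommMonoid M] {N : ℕ} (g : Fin N → α) (X : α → M)
    (i : α) : ((i ::ₘ (↑(List.ofFn g) : Multiset α)).map X).prod = X i * ∏ k, X (g k) := by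
  simp [List.prod_ofFn, Function.comp]

example : True := trivial

lemma exists_ofFn_eq {α : Type*} (A : Multiset α) (N : ℕ) (h : A.card = N) :
    ∃ a : Fin N → α, A = ↑(List.ofFn a) := by
  have hlen : A.toList.length = N := by rw [Multiset.length_toList, h]
  refine ⟨fun k => A.toList.get (Fin.cast hlen.symm k), ?_⟩
  have : List.ofFn (fun k => A.toList.get (Fin.cast hlen.symm k)) = A.toList := by
    apply List.ext_get
    · simp [hlen]
    · intro k h1 h2
      simp [List.get_ofFn]
  rw [this, Multiset.coe_toList]

lemma pairing {n : ℕ} : ∀ (c : ℕ), ∀ (M : Multiset (Fin n)), M.card = c → Even c →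
    ∀ i : Fin n, i ∈ M →
    ∃ (A : Multiset (Fin n)) (φ : Fin n → Fin n), i ∈ A ∧ M = A + A.map φ := by
  intro c
  induction c using Nat.strong_induction_on with
  | _ c IH =>
  intro M hcard hev i hi
  set μ := M.count i with hμdef
  have hμpos : 0 < μ := Multiset.count_pos.mpr hi
  by_cases hμe : Even μ
  · -- even multiplicity of i
    obtain ⟨m, hm⟩ := hμe
    have hmpos : 0 < m := by omega
    have hsplit : M = Multiset.replicate μ i + M.filter (fun v => ¬ v = i) := by
      conv_lhs => rw [← Multiset.filter_add_not (fun v => v = i) M]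
      rw [Multiset.filter_eq']
    set M' : Multiset (Fin n) := M.filter (fun v => ¬ v = i) with hM'def
    have hc : c = μ + M'.card := by
      have := congrArg Multiset.card hsplit
      simp only [Multiset.card_add, Multiset.card_replicate, hcard] at this
      omega
    by_cases hM0 : M' = 0
    · refine ⟨Multiset.replicate m i, id, ?_, ?_⟩
      · exact Multiset.mem_replicate.mpr ⟨by omega, rfl⟩
      · rw [hsplit, hM0, Multiset.map_id, hm, Multiset.replicate_add]
        simp
    · obtain ⟨i', hi'⟩ := Multiset.exists_mem_of_ne_zero hM0
      have hlt : M'.card < c := by omega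
      have hev' : Even M'.card := by
        obtain ⟨e, he⟩ := hev
        exact ⟨e - m, by omega⟩
      obtain ⟨A', φ', hiA', hMA'⟩ := IH M'.card hlt M' rfl hev' i' hi'
      have hA'ne : ∀ v ∈ A', ¬ v = i := by
        intro v hv
        have hvM : v ∈ M' := Multiset.mem_of_le (hMA' ▸ Multiset.le_add_right _ _) hv
        rw [hM'def, Multiset.mem_filter] at hvM
        exact hvM.2
      set φ : Fin n → Fin n := fun v => if v = i then i else φ' v with hφdef
      have e1 : φ i = i := by simp [hφdef]
      have e2 : A'.map φ = A'.map φ' :=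
        Multiset.map_congr rfl (fun v hv => by simp [hφdef, hA'ne v hv])
      refine ⟨Multiset.replicate m i + A', φ, ?_, ?_⟩
      · exact Multiset.mem_add.mpr (Or.inl (Multiset.mem_replicate.mpr ⟨by omega, rfl⟩))
      · rw [Multiset.map_add, Multiset.map_replicate, e1, e2,
          hsplit, hMA', hm, Multiset.replicate_add]
        abel
  · -- odd multiplicity of i : find w ≠ i with odd count
    have hμodd : Odd μ := Nat.not_even_iff_odd.mp hμe
    have hexw : ∃ w : Fin n, ¬ w = i ∧ Odd (M.count w) := by
      by_contra h
      push_neg at h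
      simp only [Nat.not_odd_iff_even] at h
      have hsum := Multiset.toFinset_sum_count_eq M
      have hiF : i ∈ M.toFinset := Multiset.mem_toFinset.mpr hi
      have h2 := Finset.sum_erase_add M.toFinset (fun v => M.count v) hiF
      simp only [hsum, hcard] at h2
      have hevsum : Even (∑ x ∈ M.toFinset.erase i, M.count x) := by
        refine Finset.even_sum _ ?_
        intro v hv
        exact h v (Finset.ne_of_mem_erase hv)
      have : Even μ := by
        obtain ⟨a, ha⟩ := hevsum
        obtain ⟨b, hb⟩ := hev
        exact ⟨b - a, by omega⟩
      exact hμe this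
    obtain ⟨w, hwi, hνodd⟩ := hexw
    set ν := M.count w with hνdef
    have hνpos : 0 < ν := hνodd.pos
    set M'' : Multiset (Fin n) := M.filter (fun v => ¬ v = i ∧ ¬ v = w) with hM''def
    have hsplit : M = Multiset.replicate μ i + Multiset.replicate ν w + M'' := by
      ext v
      rw [Multiset.count_add, Multiset.count_add, Multiset.count_replicate,
        Multiset.count_replicate, hM''def, Multiset.count_filter]
      by_cases hv1 : v = i
      · rw [if_pos hv1.symm, if_neg (fun h : w = v => hwi (h.trans hv1)),
          if_neg (fun hc : ¬v = i ∧ ¬v = w => hc.1 hv1), hv1]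
        omega
      · by_cases hv2 : v = w
        · rw [if_neg (fun h : i = v => hv1 h.symm), if_pos hv2.symm,
            if_neg (fun hc : ¬v = i ∧ ¬v = w => hc.2 hv2), hv2]
          omega
        · rw [if_neg (fun h : i = v => hv1 h.symm), if_neg (fun h : w = v => hv2 h.symm),
            if_pos ⟨hv1, hv2⟩]
          omega
    have hcards : c = μ + ν + M''.card := by
      have := congrArg Multiset.card hsplit
      simp only [Multiset.card_add, Multiset.card_replicate, hcard] at this
      omega
    have hevM'' : Even M''.card := by
      obtain ⟨a, ha⟩ := hμodd
      obtain ⟨b, hb⟩ := hνodd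
      obtain ⟨e, he⟩ := hev
      exact ⟨e - a - b - 1, by omega⟩
    -- recurse on M''
    have hrec : ∃ (A'' : Multiset (Fin n)) (φ'' : Fin n → Fin n),
        M'' = A'' + A''.map φ'' ∧ ∀ v ∈ A'', ¬ v = i ∧ ¬ v = w := by
      by_cases hM0 : M'' = 0
      · exact ⟨0, id, by simp [hM0], by simp⟩
      · obtain ⟨i'', hi''⟩ := Multiset.exists_mem_of_ne_zero hM0
        have hlt : M''.card < c := by omega
        obtain ⟨A'', φ'', _, hMA''⟩ := IH M''.card hlt M'' rfl hevM'' i'' hi''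
        refine ⟨A'', φ'', hMA'', ?_⟩
        intro v hv
        have hvM : v ∈ M'' := Multiset.mem_of_le (hMA'' ▸ Multiset.le_add_right _ _) hv
        rw [hM''def, Multiset.mem_filter] at hvM
        exact hvM.2
    obtain ⟨A'', φ'', hMA'', hA''ne⟩ := hrec
    rcases le_or_gt μ ν with hle | hgt
    · -- μ ≤ ν : A = μ·i + k·w + A'', φ(i) = w, φ(w) = w
      obtain ⟨k, hk⟩ : ∃ k, ν = μ + (k + k) := by
        obtain ⟨a, ha⟩ := hμodd; obtain ⟨b, hb⟩ := hνodd
        exact ⟨b - a, by omega⟩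
      set φ : Fin n → Fin n := fun v => if v = i then w else if v = w then w else φ'' v
        with hφdef
      have e1 : φ i = w := by simp [hφdef]
      have e2 : φ w = w := by simp [hφdef, hwi]
      have e3 : A''.map φ = A''.map φ'' :=
        Multiset.map_congr rfl
          (fun v hv => by simp [hφdef, (hA''ne v hv).1, (hA''ne v hv).2])
      refine ⟨Multiset.replicate μ i + Multiset.replicate k w + A'', φ, ?_, ?_⟩
      · refine Multiset.mem_add.mpr (Or.inl (Multiset.mem_add.mpr (Or.inl ?_)))
        exact Multiset.mem_replicate.mpr ⟨by omega, rfl⟩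
      · rw [Multiset.map_add, Multiset.map_add, Multiset.map_replicate,
          Multiset.map_replicate, e1, e2, e3, hsplit, hMA'', hk,
          Multiset.replicate_add, Multiset.replicate_add]
        abel
    · -- ν < μ : A = ν·w + k·i + A'', φ(w) = i, φ(i) = i
      obtain ⟨k, hk, hkpos⟩ : ∃ k, μ = ν + (k + k) ∧ 0 < k := by
        obtain ⟨a, ha⟩ := hμodd; obtain ⟨b, hb⟩ := hνodd
        exact ⟨a - b, by omega, by omega⟩
      set φ : Fin n → Fin n := fun v => if v = i then i else if v = w then i else φ'' v
        with hφdef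
      have e1 : φ i = i := by simp [hφdef]
      have e2 : φ w = i := by simp [hφdef, hwi]
      have e3 : A''.map φ = A''.map φ'' :=
        Multiset.map_congr rfl
          (fun v hv => by simp [hφdef, (hA''ne v hv).1, (hA''ne v hv).2])
      refine ⟨Multiset.replicate ν w + Multiset.replicate k i + A'', φ, ?_, ?_⟩
      · refine Multiset.mem_add.mpr (Or.inl (Multiset.mem_add.mpr (Or.inr ?_)))
        exact Multiset.mem_replicate.mpr ⟨by omega, rfl⟩
      · rw [Multiset.map_add, Multiset.map_add, Multiset.map_replicate,
          Multiset.map_replicate, e1, e2, e3, hsplit, hMA'', hk,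
          Multiset.replicate_add, Multiset.replicate_add]
        abel

lemma main {n d : ℕ} : ∀ (L : ℕ) (i : Fin n) (j : Fin (2 ^ L - 1) → Fin n),
    ∃ W : ℕ → Matrix (Fin n) (Fin n) ℝ, ∀ X : Matrix (Fin n) (Fin d) ℝ,
      baseModel W X L i = X i * ∏ k, X (j k) := by
  intro L
  induction L with
  | zero =>
    intro i j
    refine ⟨fun _ => 0, fun X => ?_⟩
    haveI : IsEmpty (Fin (2 ^ 0 - 1)) := by
      rw [show (2:ℕ) ^ 0 - 1 = 0 from rfl]; infer_instance
    simp [baseModel]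
  | succ L IH =>
    intro i j
    set M : Multiset (Fin n) := i ::ₘ (↑(List.ofFn j)) with hM
    have hiM : i ∈ M := Multiset.mem_cons_self _ _
    have hpow : 1 ≤ 2 ^ (L + 1) := Nat.one_le_two_pow
    have hpow' : 1 ≤ 2 ^ L := Nat.one_le_two_pow
    have hcard : M.card = 2 ^ (L + 1) := by
      rw [hM, Multiset.card_cons, Multiset.coe_card, List.length_ofFn]
      omega
    obtain ⟨A, φ, hiA, hMA⟩ := pairing _ M hcard ⟨2 ^ L, by ring⟩ i hiM
    obtain ⟨A', hA'⟩ := Multiset.exists_cons_of_mem hiA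
    have hcardA : A.card = 2 ^ L := by
      have h2 := congrArg Multiset.card hMA
      rw [hcard, Multiset.card_add, Multiset.card_map] at h2
      omega
    have hcardA' : A'.card = 2 ^ L - 1 := by
      rw [hA', Multiset.card_cons] at hcardA
      omega
    obtain ⟨a', ha'⟩ := exists_ofFn_eq A' (2 ^ L - 1) hcardA'
    obtain ⟨W'', hW''⟩ := IH i a'
    set Wφ : Matrix (Fin n) (Fin n) ℝ := fun r t => if t = φ r then 1 else 0 with hWφ
    set Wt : ℕ → Matrix (Fin n) (Fin n) ℝ := fun m => if m ≤ 1 then Wφ else W'' (m - 1)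
      with hWt
    refine ⟨Wt, fun X => ?_⟩
    set Y : Matrix (Fin n) (Fin d) ℝ := baseModel Wt X 1 with hY
    have hYr : ∀ r, Y r = X (φ r) * X r := by
      intro r
      funext c
      show (Wt 1 * X) r c * X r c = _
      have : (Wt 1 * X) r c = X (φ r) c := by
        rw [hWt]
        simp only [le_refl, if_pos, Matrix.mul_apply, hWφ, ite_mul, one_mul, zero_mul]
        simp [Finset.sum_ite_eq', Finset.sum_ite_eq]
      rw [this]
      rfl
    have h1 : baseModel Wt X (L + 1) = baseModel W'' Y L := by
      rw [baseModel_shift]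
      exact baseModel_congr _ _ _ _ (fun m hm1 hm2 => by
        rw [hWt]
        simp only
        rw [if_neg (by omega)]
        congr 1)
    have hprod : (M.map X).prod = (A.map (fun r => X (φ r) * X r)).prod := by
      change (Multiset.map (fun r => X r) M).prod = _
      rw [hMA, Multiset.map_add, Multiset.prod_add, Multiset.map_map]
      exact Multiset.prod_map_mul.symm.trans
        (congrArg Multiset.prod (Multiset.map_congr rfl fun r _ => mul_comm _ _))
    have e1 : X i * ∏ k, X (j k) = (M.map X).prod := by
      rw [hM]
      exact (prod_cons_ofFn j X i).symm
    have e2 : Y i * ∏ k, Y (a' k) = (A.map (fun r => X (φ r) * X r)).prod := by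
      rw [hA', ha']
      rw [prod_cons_ofFn a' (fun r => X (φ r) * X r) i]
      simp only [hYr]
    rw [h1, hW'' Y, e2, ← hprod, ← e1]

/-- An `L`-layer base model (with zero biases) is `2^L`-polynomial-expressive: for every node `i`
and every degree-`(2^L - 1)` monomial formed by rows of `X`, there are weight matrices such that
the output row at `i` equals `Xᵢ ⊙ X_{j₁} ⊙ ⋯ ⊙ X_{j_{2^L-1}}` for all inputs `X`. -/
theorem stmt0 (n d L : ℕ) (hn : 1 ≤ n) (hd : 1 ≤ d) (hL : 1 ≤ L)
    (i : Fin n) (j : Fin (2 ^ L - 1) → Fin n) :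
    ∃ W : ℕ → Matrix (Fin n) (Fin n) ℝ,
      ∀ X : Matrix (Fin n) (Fin d) ℝ,
        baseModel W X L i = X i * ∏ k, X (j k) := by
  exact main L i j
end

section
/- Fix n ≥ 1, d ≥ 1, L ≥ 0, a node i ∈ {1,…,n}, an integer r ≥ 1 with r ≠ 2^L, and an index tuple (j₁,…,j_{r−1}) ∈ {1,…,n}^{r−1}. Then there exist NO weight matrices W^{(1)},…,W^{(L)} ∈ ℝ^{n×n} such that the L-layer base model with all bias matrices B^{(l)} = 0 satisfies X^{(L)}_i = X_i ⊙ X_{j₁} ⊙ ⋯ ⊙ X_{j_{r−1}} for every X ∈ ℝ^{n×d}. That is, without the bias terms the base model cannot represent any monomial of degree different from 2^L. -/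
open Matrix Finset

/-- Without the bias terms, the `L`-layer base model cannot represent any monomial of degree
`r ≠ 2^L`: there are no weight matrices making the output at node `i` equal to
`Xᵢ ⊙ X_{j₁} ⊙ ⋯ ⊙ X_{j_{r-1}}` for every input `X`. -/
theorem stmt6 (n d L : ℕ) (hn : 1 ≤ n) (hd : 1 ≤ d)
    (i : Fin n) (r : ℕ) (hr : 1 ≤ r) (hrL : r ≠ 2 ^ L)
    (j : Fin (r - 1) → Fin n) :
    ¬ ∃ W : ℕ → Matrix (Fin n) (Fin n) ℝ,
        ∀ X : Matrix (Fin n) (Fin d) ℝ,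
          baseModel W X L i = X i * ∏ k, X (j k) := by
  rintro ⟨W, hW⟩
  -- constant input matrices
  set C : ℝ → Matrix (Fin n) (Fin d) ℝ := fun c _ _ => c with hC
  have key : ∀ (c : ℝ) (l : ℕ) (a : Fin n) (b : Fin d),
      baseModel W (C c) l a b = baseModel W (C 1) l a b * c ^ (2 ^ l) := by
    intro c l
    induction l with
    | zero => intro a b; simp [baseModel, hC]
    | succ l ih =>
      intro a b
      simp only [baseModel, Matrix.hadamard, Matrix.mul_apply, Matrix.of_apply]
      simp only [ih]
      rw [show (2:ℕ) ^ (l+1) = 2 ^ l + 2 ^ l by ring, pow_add]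
      rw [Finset.sum_congr rfl (fun k _ => by ring : ∀ k ∈ Finset.univ,
        W (l+1) a k * (baseModel W (C 1) l k b * c ^ 2 ^ l)
          = (W (l+1) a k * baseModel W (C 1) l k b) * c ^ 2 ^ l)]
      rw [← Finset.sum_mul]
      ring
  obtain ⟨b, hb⟩ : ∃ b : Fin d, True := ⟨⟨0, hd⟩, trivial⟩
  have eval : ∀ c : ℝ, baseModel W (C 1) L i b * c ^ (2 ^ L) = c ^ r := by
    intro c
    have h := congrFun (hW (C c)) b
    rw [key c L i b] at h
    rw [h]
    simp only [Pi.mul_apply, Finset.prod_apply, hC]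
    rw [Finset.prod_const, Finset.card_univ, Fintype.card_fin]
    rw [← pow_succ']
    congr 1
    omega
  have h1 := eval 1
  simp at h1
  have h2 := eval 2
  rw [h1, one_mul] at h2
  exact hrL ((pow_right_injective₀ (by norm_num : (0:ℝ) < 2) (by norm_num)) h2).symm
end
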